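/- arXiv:2204.03285 — 3 statements merged into one kernel-verified Lean document; each statement's English description precedes it below -/
import Mathlib

section
/- Let b₁, b₂ ≥ 2 and ρ₁, ρ₂, ρ₃ ∈ (-1,1) with ρ₁, ρ₂ ≥ 0 and ρ₁ρ₂ ≥ ρ₃². Then the inequality ((b₁b₂ - b₁ - b₂ + 1)ρ₂ + b₁ - 1)ρ₁ - b₁b₂ρ₃² + (b₂-1)ρ₂ + 1 > 0 holds; consequently the block matrix M of Proposition 2.1 is positive definite. -/
/-- The off-diagonal-ones matrix `J = 𝟏 - I`. -/
noncomputable def Jmat (n : ℕ) : Matrix (Fin n) (Fin n) ℝ :=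
  Matrix.of fun i j => if i = j then 0 else 1

/-- The two-block matrix `M = [[I + ρ₁J, ρ₃𝟏],[ρ₃𝟏, I + ρ₂J]]`. -/
noncomputable def blockM2 (b₁ b₂ : ℕ) (ρ₁ ρ₂ ρ₃ : ℝ) :
    Matrix (Fin b₁ ⊕ Fin b₂) (Fin b₁ ⊕ Fin b₂) ℝ :=
  Matrix.fromBlocks (1 + ρ₁ • Jmat b₁) (Matrix.of fun _ _ => ρ₃)
    (Matrix.of fun _ _ => ρ₃) (1 + ρ₂ • Jmat b₂)

lemma block_row_sum {n : ℕ} (c : ℝ) (y : Fin n → ℝ) (i : Fin n) :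
    ∑ k, ((if i = k then (1:ℝ) else 0) + c * (if i = k then 0 else 1)) * y k
      = (1 - c) * y i + c * ∑ k, y k := by
  have h : ∀ k ∈ Finset.univ, ((if i = k then (1:ℝ) else 0) + c * (if i = k then 0 else 1)) * y k
      = c * y k + (if i = k then (1 - c) * y k else 0) := by
    intro k _; by_cases h : i = k <;> simp [h] <;> ring
  rw [Finset.sum_congr rfl h, Finset.sum_add_distrib, Finset.sum_ite_eq, ← Finset.mul_sum]
  simp [add_comm]

lemma quad_nonneg (ρ₁ ρ₂ ρ₃ S T : ℝ) (h1 : 0 ≤ ρ₁) (h2 : 0 ≤ ρ₂)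
    (hg : ρ₃ ^ 2 ≤ ρ₁ * ρ₂) :
    0 ≤ ρ₁ * S ^ 2 + 2 * ρ₃ * S * T + ρ₂ * T ^ 2 := by
  rcases eq_or_lt_of_le h1 with h | h
  · have h3 : ρ₃ = 0 := by nlinarith [sq_nonneg ρ₃]
    subst h3; rw [← h]; nlinarith [sq_nonneg T]
  · nlinarith [sq_nonneg (ρ₁ * S + ρ₃ * T), mul_nonneg (sub_nonneg.2 hg) (sq_nonneg T)]

theorem stmt_1 (b₁ b₂ : ℕ) (hb₁ : 2 ≤ b₁) (hb₂ : 2 ≤ b₂) (ρ₁ ρ₂ ρ₃ : ℝ)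
    (h₁ : ρ₁ ∈ Set.Ioo (-1 : ℝ) 1) (h₂ : ρ₂ ∈ Set.Ioo (-1 : ℝ) 1)
    (h₃ : ρ₃ ∈ Set.Ioo (-1 : ℝ) 1) (hρ₁ : 0 ≤ ρ₁) (hρ₂ : 0 ≤ ρ₂)
    (hgeom : ρ₃ ^ 2 ≤ ρ₁ * ρ₂) :
    (((b₁ : ℝ) * b₂ - b₁ - b₂ + 1) * ρ₂ + b₁ - 1) * ρ₁
        - (b₁ : ℝ) * b₂ * ρ₃ ^ 2 + ((b₂ : ℝ) - 1) * ρ₂ + 1 > 0 ∧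
      (blockM2 b₁ b₂ ρ₁ ρ₂ ρ₃).PosDef := by
  obtain ⟨h1l, h1r⟩ := h₁
  obtain ⟨h2l, h2r⟩ := h₂
  have hb1 : (2:ℝ) ≤ b₁ := by exact_mod_cast hb₁
  have hb2 : (2:ℝ) ≤ b₂ := by exact_mod_cast hb₂
  constructor
  · have h4 : 0 ≤ ((b₁:ℝ) * b₂) * (ρ₁ * ρ₂ - ρ₃ ^ 2) := by
      apply mul_nonneg (by nlinarith) (by linarith)
    have h5 : 0 ≤ ((b₁:ℝ) - 1) * (ρ₁ * (1 - ρ₂)) := by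
      apply mul_nonneg (by linarith) (mul_nonneg hρ₁ (by linarith))
    have h6 : 0 ≤ ((b₂:ℝ) - 1) * (ρ₂ * (1 - ρ₁)) := by
      apply mul_nonneg (by linarith) (mul_nonneg hρ₂ (by linarith))
    have h7 : ρ₁ * ρ₂ < 1 := by nlinarith
    nlinarith [h4, h5, h6, h7]
  · rw [Matrix.posDef_iff_dotProduct_mulVec]
    constructor
    · unfold blockM2 Jmat
      refine Matrix.IsHermitian.ext fun i j => ?_
      cases i <;> cases j <;>
        simp [Matrix.fromBlocks, Matrix.one_apply, eq_comm, Matrix.conjTranspose_apply] <;>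
        split <;> simp_all
    · intro x hx
      have key : dotProduct (star x) ((blockM2 b₁ b₂ ρ₁ ρ₂ ρ₃).mulVec x)
          = (1 - ρ₁) * (∑ i, x (Sum.inl i) ^ 2) + (1 - ρ₂) * (∑ j, x (Sum.inr j) ^ 2)
            + (ρ₁ * (∑ i, x (Sum.inl i)) ^ 2
              + 2 * ρ₃ * (∑ i, x (Sum.inl i)) * (∑ j, x (Sum.inr j))
              + ρ₂ * (∑ j, x (Sum.inr j)) ^ 2) := by
        simp only [star_trivial, dotProduct, Matrix.mulVec, blockM2,
          Matrix.fromBlocks, Fintype.sum_sum_type, Sum.elim_inl, Sum.elim_inr,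
          Matrix.of_apply, Matrix.add_apply, Matrix.smul_apply, Jmat,
          Matrix.one_apply, smul_eq_mul]
        have e1 : ∀ i : Fin b₁, ∑ k, ((if i = k then (1:ℝ) else 0)
            + ρ₁ * (if i = k then 0 else 1)) * x (Sum.inl k)
            = (1 - ρ₁) * x (Sum.inl i) + ρ₁ * ∑ k, x (Sum.inl k) :=
          fun i => block_row_sum ρ₁ (fun k => x (Sum.inl k)) i
        have e2 : ∀ j : Fin b₂, ∑ k, ((if j = k then (1:ℝ) else 0)
            + ρ₂ * (if j = k then 0 else 1)) * x (Sum.inr k)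
            = (1 - ρ₂) * x (Sum.inr j) + ρ₂ * ∑ k, x (Sum.inr k) :=
          fun j => block_row_sum ρ₂ (fun k => x (Sum.inr k)) j
        simp only [e1, e2, ← Finset.mul_sum]
        have e3 : ∀ i : Fin b₁, x (Sum.inl i) * ((1 - ρ₁) * x (Sum.inl i)
              + ρ₁ * ∑ k, x (Sum.inl k) + ρ₃ * ∑ k, x (Sum.inr k))
            = (1 - ρ₁) * x (Sum.inl i) ^ 2
              + x (Sum.inl i) * (ρ₁ * (∑ k, x (Sum.inl k)) + ρ₃ * ∑ k, x (Sum.inr k)) :=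
          fun i => by ring
        have e4 : ∀ j : Fin b₂, x (Sum.inr j) * (ρ₃ * (∑ k, x (Sum.inl k))
              + ((1 - ρ₂) * x (Sum.inr j) + ρ₂ * ∑ k, x (Sum.inr k)))
            = (1 - ρ₂) * x (Sum.inr j) ^ 2
              + x (Sum.inr j) * (ρ₃ * (∑ k, x (Sum.inl k)) + ρ₂ * ∑ k, x (Sum.inr k)) :=
          fun j => by ring
        simp only [e3, e4, Finset.sum_add_distrib, ← Finset.mul_sum, ← Finset.sum_mul]
        ring
      rw [key]
      have hq := quad_nonneg ρ₁ ρ₂ ρ₃ (∑ i, x (Sum.inl i)) (∑ j, x (Sum.inr j)) hρ₁ hρ₂ hgeom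
      have hA : 0 ≤ ∑ i, x (Sum.inl i) ^ 2 := Finset.sum_nonneg fun i _ => sq_nonneg _
      have hB : 0 ≤ ∑ j, x (Sum.inr j) ^ 2 := Finset.sum_nonneg fun j _ => sq_nonneg _
      have hpos : 0 < ∑ i, x (Sum.inl i) ^ 2 + ∑ j, x (Sum.inr j) ^ 2 := by
        rcases (Function.ne_iff).1 hx with ⟨i, hi⟩
        have : (0:ℝ) < x i ^ 2 := lt_of_le_of_ne (sq_nonneg _) (Ne.symm (pow_ne_zero 2 hi))
        cases i with
        | inl i =>
            have h1 : x (Sum.inl i) ^ 2 ≤ ∑ k, x (Sum.inl k) ^ 2 :=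
              Finset.single_le_sum (f := fun k => x (Sum.inl k) ^ 2) (fun k _ => sq_nonneg _) (Finset.mem_univ i)
            linarith
        | inr j =>
            have h1 : x (Sum.inr j) ^ 2 ≤ ∑ k, x (Sum.inr k) ^ 2 :=
              Finset.single_le_sum (f := fun k => x (Sum.inr k) ^ 2) (fun k _ => sq_nonneg _) (Finset.mem_univ j)
            linarith
      nlinarith [mul_nonneg (le_of_lt (show (0:ℝ) < 1 - ρ₁ by linarith)) hA,
        mul_nonneg (le_of_lt (show (0:ℝ) < 1 - ρ₂ by linarith)) hB,
        mul_pos (show (0:ℝ) < 1 - ρ₁ by linarith) (show 0 < ∑ i, x (Sum.inl i) ^ 2 + ∑ j, x (Sum.inr j) ^ 2 from hpos)]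
end

section
/- Let (Xᵢ)_{i=1..n} be i.i.d. random vectors and g a symmetric measurable kernel of two arguments with E|g(X₁,X₂)| < ∞. Define the U-statistic U_n = (2/(n(n-1))) ∑_{1 ≤ i₁ < i₂ ≤ n} g(X_{i₁}, X_{i₂}), and set ζ₁ = Var[E[g(X₁,X₂) | X₂]] and ζ₂ = Var[g(X₁,X₂)] (both assumed finite). Then Var[U_n] = (2/(n(n-1)))(2(n-2)ζ₁ + ζ₂). -/
/-!
Write `H(x, y) = g(x, y) - m` and `Y_p = H(X_i, X_j)` for `p = (i, j)`, `i < j`, so that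
`U_n - m = c ∑_p Y_p` with `c = 2 / (n (n - 1))`, and `E[(U_n - m)²] = c² ∑_{p,q} E[Y_p Y_q]`.
Independence and identical distribution make `E[Y_p Y_q]` depend only on how `p` and `q` overlap:
it is `ζ₂` for `q = p`, zero for disjoint pairs (a product of two independent centred factors),
and for pairs sharing one index, after using the symmetry of `g` to put the shared index in the
second slot, Fubini over the three distinct coordinates gives `∫ (∫ H(y, x) dν(y))² dν(x) = ζ₁`.
Each pair meets exactly `2 (n - 2)` other pairs, and there are `n (n - 1) / 2` pairs.
-/

open MeasureTheory ProbabilityTheory Finset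

def ltPairs (n : ℕ) : Finset (Fin n × Fin n) := univ.filter fun p => p.1 < p.2

@[simp] lemma mem_ltPairs {n : ℕ} {p : Fin n × Fin n} : p ∈ ltPairs n ↔ p.1 < p.2 := by
  simp [ltPairs]

abbrev SharesIndex {n : ℕ} (p q : Fin n × Fin n) : Prop :=
  q.1 = p.1 ∨ q.1 = p.2 ∨ q.2 = p.1 ∨ q.2 = p.2

lemma two_mul_card_ltPairs (n : ℕ) : 2 * #(ltPairs n) = n * (n - 1) := by
  have hswap : #((ltPairs n).image Prod.swap) = #(ltPairs n) :=
    card_image_of_injective _ Prod.swap_injective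
  have hdisj : Disjoint (ltPairs n) ((ltPairs n).image Prod.swap) := by
    rw [disjoint_left]
    intro p
    simp only [mem_ltPairs, mem_image, Prod.exists, Prod.swap_prod_mk, not_exists, not_and]
    grind
  have hunion : ltPairs n ∪ (ltPairs n).image Prod.swap = (univ : Finset (Fin n)).offDiag := by
    ext p
    simp only [mem_union, mem_ltPairs, mem_image, Prod.exists, Prod.swap_prod_mk, mem_offDiag,
      mem_univ, true_and]
    grind
  have := congrArg card hunion
  rw [card_union_of_disjoint hdisj, hswap, offDiag_card, card_univ, Fintype.card_fin] at this
  rw [Nat.mul_sub_one]; omega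

lemma two_div_mul_card_ltPairs {n : ℕ} (hn : 2 ≤ n) :
    2 / ((n : ℝ) * ((n : ℝ) - 1)) * #(ltPairs n) = 1 := by
  have h2 := congrArg (Nat.cast : ℕ → ℝ) (two_mul_card_ltPairs n)
  push_cast [Nat.cast_sub (by omega : 1 ≤ n)] at h2
  have hn' : (2 : ℝ) ≤ n := by exact_mod_cast hn
  rw [div_mul_eq_mul_div, h2, div_self (by nlinarith)]

lemma card_sharesIndex {n : ℕ} {p : Fin n × Fin n} (hp : p ∈ ltPairs n) :
    #((ltPairs n).filter fun q => q ≠ p ∧ SharesIndex p q) = 2 * (n - 2) := by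
  rw [mem_ltPairs] at hp
  have hcard :
      #(({p.1, p.2} : Finset (Fin n)) ×ˢ ({p.1, p.2} : Finset (Fin n))ᶜ) = 2 * (n - 2) := by
    rw [card_product, card_compl, card_pair hp.ne, Fintype.card_fin]
  rw [← hcard]
  -- a meeting pair corresponds to (shared index, other index)
  refine card_nbij' (fun q => if q.1 = p.1 ∨ q.1 = p.2 then q else q.swap)
    (fun r => if r.1 < r.2 then r else r.swap) ?_ ?_ ?_ ?_
  all_goals
    intro q hq
    simp only [coe_filter, coe_product, coe_compl, coe_insert, coe_singleton, Set.mem_ofPred_eq,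
      Set.mem_prod, Set.mem_compl_iff, Set.mem_insert_iff, Set.mem_singleton_iff, mem_ltPairs]
      at hq ⊢
    grind

lemma integral_sq_sum {Ω ι : Type*} [MeasurableSpace Ω] {μ : Measure Ω} (s : Finset ι)
    {Y : ι → Ω → ℝ} (hY : ∀ i ∈ s, MemLp (Y i) 2 μ) :
    ∫ ω, (∑ i ∈ s, Y i ω) ^ 2 ∂μ = ∑ i ∈ s, ∑ j ∈ s, ∫ ω, Y i ω * Y j ω ∂μ := by
  have hint : ∀ i ∈ s, ∀ j ∈ s, Integrable (fun ω => Y i ω * Y j ω) μ :=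
    fun i hi j hj => (hY i hi).integrable_mul (hY j hj)
  simp_rw [sq, sum_mul_sum]
  rw [integral_finsetSum _ fun i hi => integrable_finsetSum _ (hint i hi)]
  exact sum_congr rfl fun i hi => integral_finsetSum _ (hint i hi)

section IID

variable {Ω α : Type*} [MeasurableSpace Ω] [MeasurableSpace α] {μ : Measure Ω}
  [IsProbabilityMeasure μ] {n : ℕ} {X : Fin n → Ω → α} {ν : Measure α}

lemma measurePreserving_pair (hXm : ∀ i, Measurable (X i)) (hindep : iIndepFun X μ)
    (hid : ∀ i, μ.map (X i) = ν) {i j : Fin n} (hij : i ≠ j) :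
    MeasurePreserving (fun ω => (X i ω, X j ω)) μ (ν.prod ν) where
  measurable := (hXm i).prodMk (hXm j)
  map_eq := by
    rw [(indepFun_iff_map_prod_eq_prod_map_map (hXm i).aemeasurable (hXm j).aemeasurable).mp
      (hindep.indepFun hij), hid i, hid j]

lemma measurePreserving_triple (hXm : ∀ i, Measurable (X i)) (hindep : iIndepFun X μ)
    (hid : ∀ i, μ.map (X i) = ν) {a b c : Fin n} (hab : a ≠ b) (hac : a ≠ c) (hbc : b ≠ c) :
    MeasurePreserving (fun ω => (X b ω, X a ω, X c ω)) μ (ν.prod (ν.prod ν)) where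
  measurable := (hXm b).prodMk ((hXm a).prodMk (hXm c))
  map_eq := by
    have hind : IndepFun (X b) (fun ω => (X a ω, X c ω)) μ :=
      (hindep.indepFun_prodMk hXm a c b hab hbc.symm).symm
    rw [(indepFun_iff_map_prod_eq_prod_map_map (hXm b).aemeasurable
      ((hXm a).prodMk (hXm c)).aemeasurable).mp hind, hid b,
      (measurePreserving_pair hXm hindep hid hac).map_eq]

variable {H : α × α → ℝ}

lemma integral_mul_eq_zero_of_disjoint (hXm : ∀ i, Measurable (X i)) (hindep : iIndepFun X μ)
    (hid : ∀ i, μ.map (X i) = ν) (hHm : Measurable H) (hH0 : ∫ z, H z ∂(ν.prod ν) = 0)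
    {i j k l : Fin n} (hij : i ≠ j) (hik : i ≠ k) (hil : i ≠ l) (hjk : j ≠ k) (hjl : j ≠ l) :
    ∫ ω, H (X i ω, X j ω) * H (X k ω, X l ω) ∂μ = 0 := by
  have hind : IndepFun (fun ω => H (X i ω, X j ω)) (fun ω => H (X k ω, X l ω)) μ :=
    (hindep.indepFun_prodMk_prodMk hXm i j k l hik hil hjk hjl).comp hHm hHm
  have hmean : ∫ ω, H (X i ω, X j ω) ∂μ = 0 :=
    ((measurePreserving_pair hXm hindep hid hij).hasLaw.integral_comp
      hHm.aestronglyMeasurable).trans hH0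
  rw [hind.integral_fun_mul_eq_mul_integral
    (hHm.comp ((hXm i).prodMk (hXm j))).aestronglyMeasurable
    (hHm.comp ((hXm k).prodMk (hXm l))).aestronglyMeasurable, hmean, zero_mul]

lemma integral_mul_eq_of_common_snd [IsProbabilityMeasure ν] (hXm : ∀ i, Measurable (X i))
    (hindep : iIndepFun X μ) (hid : ∀ i, μ.map (X i) = ν) (hHm : Measurable H)
    (hH : MemLp H 2 (ν.prod ν)) {a b c : Fin n} (hab : a ≠ b) (hac : a ≠ c) (hbc : b ≠ c) :
    ∫ ω, H (X a ω, X b ω) * H (X c ω, X b ω) ∂μ = ∫ x, (∫ y, H (y, x) ∂ν) ^ 2 ∂ν := by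
  set F : α × α × α → ℝ := fun q => H (q.2.1, q.1) * H (q.2.2, q.1)
  have hFm : Measurable F := by fun_prop
  have hT := measurePreserving_triple hXm hindep hid hab hac hbc
  have hFT : Integrable (F ∘ fun ω => (X b ω, X a ω, X c ω)) μ :=
    (hH.comp_measurePreserving (measurePreserving_pair hXm hindep hid hab)).integrable_mul
      (hH.comp_measurePreserving (measurePreserving_pair hXm hindep hid hbc.symm))
  have hF : Integrable F (ν.prod (ν.prod ν)) :=
    (hT.integrable_comp hFm.aestronglyMeasurable).mp hFT
  calc ∫ ω, H (X a ω, X b ω) * H (X c ω, X b ω) ∂μ = ∫ q, F q ∂(ν.prod (ν.prod ν)) :=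
        hT.hasLaw.integral_comp hFm.aestronglyMeasurable
    _ = ∫ x, ∫ r, H (r.1, x) * H (r.2, x) ∂(ν.prod ν) ∂ν := integral_prod F hF
    _ = ∫ x, (∫ y, H (y, x) ∂ν) ^ 2 ∂ν := by
        congr with x
        rw [integral_prod_mul (fun y => H (y, x)) (fun y => H (y, x)), sq]

lemma integral_mul_ltPairs [IsProbabilityMeasure ν] (hXm : ∀ i, Measurable (X i))
    (hindep : iIndepFun X μ) (hid : ∀ i, μ.map (X i) = ν) (hHm : Measurable H)
    (hH : MemLp H 2 (ν.prod ν)) (hH0 : ∫ z, H z ∂(ν.prod ν) = 0)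
    (hsymm : ∀ x y, H (x, y) = H (y, x)) {p q : Fin n × Fin n} (hp : p ∈ ltPairs n)
    (hq : q ∈ ltPairs n) :
    ∫ ω, H (X p.1 ω, X p.2 ω) * H (X q.1 ω, X q.2 ω) ∂μ =
      if q = p then ∫ z, H z ^ 2 ∂(ν.prod ν)
      else if SharesIndex p q then ∫ x, (∫ y, H (y, x) ∂ν) ^ 2 ∂ν else 0 := by
  obtain ⟨i, j⟩ := p
  obtain ⟨k, l⟩ := q
  dsimp only
  simp only [mem_ltPairs] at hp hq
  have hij := hp.ne
  have hkl := hq.ne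
  split_ifs with heq hshare
  · obtain ⟨rfl, rfl⟩ := Prod.mk.inj heq
    simp_rw [← sq]
    exact (measurePreserving_pair hXm hindep hid hij).hasLaw.integral_comp
      (hHm.pow_const 2).aestronglyMeasurable
  · have common_snd {a b c : Fin n} (hab : a ≠ b) (hac : a ≠ c) (hbc : b ≠ c) :=
      integral_mul_eq_of_common_snd hXm hindep hid hHm hH hab hac hbc
    simp only [Prod.mk.injEq] at heq
    -- by symmetry of `H`, move the shared index to the second slot of both factors
    rcases hshare with rfl | rfl | rfl | rfl
    · simp_rw [hsymm (X k _)]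
      exact common_snd hij.symm (by grind) hkl
    · simp_rw [hsymm (X k _) (X l _)]
      exact common_snd hij (by grind) hkl
    · simp_rw [hsymm (X l _) (X j _)]
      exact common_snd hij.symm (by grind) hkl.symm
    · exact common_snd hij (by grind) hkl.symm
  · simp only [SharesIndex, not_or] at hshare
    exact integral_mul_eq_zero_of_disjoint hXm hindep hid hHm hH0 hij (Ne.symm hshare.1)
      (Ne.symm hshare.2.2.1) (Ne.symm hshare.2.1) (Ne.symm hshare.2.2.2)

lemma sum_integral_mul_ltPairs [IsProbabilityMeasure ν] (hXm : ∀ i, Measurable (X i))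
    (hindep : iIndepFun X μ) (hid : ∀ i, μ.map (X i) = ν) (hHm : Measurable H)
    (hH : MemLp H 2 (ν.prod ν)) (hH0 : ∫ z, H z ∂(ν.prod ν) = 0)
    (hsymm : ∀ x y, H (x, y) = H (y, x)) {p : Fin n × Fin n} (hp : p ∈ ltPairs n) :
    ∑ q ∈ ltPairs n, ∫ ω, H (X p.1 ω, X p.2 ω) * H (X q.1 ω, X q.2 ω) ∂μ =
      ∫ z, H z ^ 2 ∂(ν.prod ν) + 2 * ((n : ℝ) - 2) * ∫ x, (∫ y, H (y, x) ∂ν) ^ 2 ∂ν := by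
  have hn : 2 ≤ n := by
    have := mem_ltPairs.mp hp
    omega
  have hcard := card_sharesIndex hp
  simp only [ne_eq] at hcard
  rw [sum_congr rfl fun q hq => integral_mul_ltPairs hXm hindep hid hHm hH hH0 hsymm hp hq,
    sum_ite, sum_ite, filter_filter, filter_eq' _ p, if_pos hp, sum_singleton, sum_const_zero,
    add_zero, sum_const, hcard, nsmul_eq_mul]
  push_cast [Nat.cast_sub hn]
  ring

theorem integral_sq_two_div_mul_sum_ltPairs [IsProbabilityMeasure ν] (hn : 2 ≤ n)
    (hXm : ∀ i, Measurable (X i)) (hindep : iIndepFun X μ) (hid : ∀ i, μ.map (X i) = ν)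
    (hHm : Measurable H) (hH : MemLp H 2 (ν.prod ν)) (hH0 : ∫ z, H z ∂(ν.prod ν) = 0)
    (hsymm : ∀ x y, H (x, y) = H (y, x)) :
    ∫ ω, (2 / ((n : ℝ) * ((n : ℝ) - 1)) * ∑ p ∈ ltPairs n, H (X p.1 ω, X p.2 ω)) ^ 2 ∂μ =
      2 / ((n : ℝ) * ((n : ℝ) - 1)) *
        (∫ z, H z ^ 2 ∂(ν.prod ν) + 2 * ((n : ℝ) - 2) * ∫ x, (∫ y, H (y, x) ∂ν) ^ 2 ∂ν) := by
  have hY (p) (hp : p ∈ ltPairs n) : MemLp (fun ω => H (X p.1 ω, X p.2 ω)) 2 μ :=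
    hH.comp_measurePreserving (measurePreserving_pair hXm hindep hid (mem_ltPairs.mp hp).ne)
  simp_rw [mul_pow]
  rw [integral_const_mul, integral_sq_sum _ hY,
    sum_congr rfl fun p hp => sum_integral_mul_ltPairs hXm hindep hid hHm hH hH0 hsymm hp,
    sum_const, nsmul_eq_mul]
  linear_combination (2 / ((n : ℝ) * ((n : ℝ) - 1)) * (∫ z, H z ^ 2 ∂(ν.prod ν) +
    2 * ((n : ℝ) - 2) * ∫ x, (∫ y, H (y, x) ∂ν) ^ 2 ∂ν)) * two_div_mul_card_ltPairs hn

end IID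

theorem stmt_12_general {Ω α : Type*} [MeasurableSpace Ω] [MeasurableSpace α]
    (μ : Measure Ω) [IsProbabilityMeasure μ] (n : ℕ) (hn : 2 ≤ n)
    (X : Fin n → Ω → α) (hXm : ∀ i, Measurable (X i))
    (hindep : iIndepFun X μ)
    (ν : Measure α) (hid : ∀ i, μ.map (X i) = ν)
    (g : α → α → ℝ) (hg : Measurable (Function.uncurry g))
    (hsymm : ∀ x y, g x y = g y x)
    (hgsq : Integrable (fun p : α × α => (g p.1 p.2) ^ 2) (ν.prod ν))
    (m ζ₁ ζ₂ : ℝ)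
    (hm : m = ∫ p : α × α, g p.1 p.2 ∂(ν.prod ν))
    (hζ₁ : ζ₁ = ∫ x, ((∫ y, g y x ∂ν) - m) ^ 2 ∂ν)
    (hζ₂ : ζ₂ = ∫ p : α × α, (g p.1 p.2 - m) ^ 2 ∂(ν.prod ν))
    (U : Ω → ℝ)
    (hU : ∀ ω, U ω = (2 / ((n : ℝ) * ((n : ℝ) - 1))) *
        ∑ p ∈ Finset.univ.filter (fun p : Fin n × Fin n => p.1 < p.2),
          g (X p.1 ω) (X p.2 ω)) :
    ∫ ω, (U ω - m) ^ 2 ∂μ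
      = (2 / ((n : ℝ) * ((n : ℝ) - 1))) * (2 * ((n : ℝ) - 2) * ζ₁ + ζ₂) := by
  have : IsProbabilityMeasure ν :=
    hid ⟨0, by omega⟩ ▸ Measure.isProbabilityMeasure_map (hXm _).aemeasurable
  set H : α × α → ℝ := fun z => g z.1 z.2 - m
  have hg2 : MemLp (fun z : α × α => g z.1 z.2) 2 (ν.prod ν) :=
    (memLp_two_iff_integrable_sq hg.aestronglyMeasurable).2 hgsq
  have hgint := hg2.integrable one_le_two
  have hH0 : ∫ z, H z ∂(ν.prod ν) = 0 := by
    rw [integral_sub hgint (integrable_const m), integral_const, probReal_univ, one_smul, hm,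
      sub_self]
  have hζ₁H : ζ₁ = ∫ x, (∫ y, H (y, x) ∂ν) ^ 2 ∂ν := by
    rw [hζ₁]
    refine integral_congr_ae ?_
    filter_upwards [hgint.prod_left_ae] with x hx
    rw [integral_sub hx (integrable_const m), integral_const, probReal_univ, one_smul]
  have hUm (ω : Ω) : U ω - m =
      2 / ((n : ℝ) * ((n : ℝ) - 1)) * ∑ p ∈ ltPairs n, H (X p.1 ω, X p.2 ω) := by
    have hU' : U ω = 2 / ((n : ℝ) * ((n : ℝ) - 1)) *
        ∑ p ∈ ltPairs n, g (X p.1 ω) (X p.2 ω) := hU ω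
    simp only [hU', H, sum_sub_distrib, sum_const, nsmul_eq_mul]
    linear_combination m * two_div_mul_card_ltPairs hn
  have hHm : Measurable H := hg.sub measurable_const
  simp_rw [hUm]
  rw [integral_sq_two_div_mul_sum_ltPairs hn hXm hindep hid hHm (hg2.sub (memLp_const m)) hH0
    (fun x y => by simp only [H, hsymm x y]), hζ₁H, hζ₂]
  ring

theorem stmt_12 {Ω α : Type*} [MeasurableSpace Ω] [MeasurableSpace α]
    (μ : Measure Ω) [IsProbabilityMeasure μ] (n : ℕ) (hn : 2 ≤ n)
    (X : Fin n → Ω → α) (hXm : ∀ i, Measurable (X i))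
    (hindep : iIndepFun X μ)
    (ν : Measure α) (hid : ∀ i, μ.map (X i) = ν)
    (g : α → α → ℝ) (hg : Measurable (Function.uncurry g))
    (hsymm : ∀ x y, g x y = g y x)
    (hgint : Integrable (fun p : α × α => g p.1 p.2) (ν.prod ν))
    (hgsq : Integrable (fun p : α × α => (g p.1 p.2) ^ 2) (ν.prod ν))
    (m ζ₁ ζ₂ : ℝ)
    (hm : m = ∫ p : α × α, g p.1 p.2 ∂(ν.prod ν))
    (hζ₁ : ζ₁ = ∫ x, ((∫ y, g y x ∂ν) - m) ^ 2 ∂ν)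
    (hζ₂ : ζ₂ = ∫ p : α × α, (g p.1 p.2 - m) ^ 2 ∂(ν.prod ν))
    (U : Ω → ℝ)
    (hU : ∀ ω, U ω = (2 / ((n : ℝ) * ((n : ℝ) - 1))) *
        ∑ p ∈ Finset.univ.filter (fun p : Fin n × Fin n => p.1 < p.2),
          g (X p.1 ω) (X p.2 ω)) :
    ∫ ω, (U ω - m) ^ 2 ∂μ
      = (2 / ((n : ℝ) * ((n : ℝ) - 1))) * (2 * ((n : ℝ) - 2) * ζ₁ + ζ₂) :=
  stmt_12_general μ n hn X hXm hindep ν hid g hg hsymm hgsq m ζ₁ ζ₂ hm hζ₁ hζ₂ U hU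
end

section
/- Let b₁, b₂ ≥ 2 and ρ ∈ (-1,1) with ρ < 0. There exist ρ₁, ρ₂ ∈ (-1,1) such that the block matrix M = [[I + ρ₁J, ρ𝟏],[ρ𝟏, I + ρ₂J]] is positive definite; for instance, ρ₁ = ρ₂ = |ρ| works. In particular, the off-diagonal correlation can be arbitrarily close to -1 regardless of the block sizes. -/
open Matrix

lemma diag_entry (n : ℕ) (r : ℝ) (i j : Fin n) :
    (1 + r • Jmat n) i j = if i = j then 1 else r := by
  simp [Jmat, Matrix.one_apply, Matrix.add_apply]
  split <;> simp

lemma row_sum (n : ℕ) (r : ℝ) (u : Fin n → ℝ) (i : Fin n) :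
    ∑ j, (1 + r • Jmat n) i j * u j = (1 - r) * u i + r * ∑ j, u j := by
  simp only [diag_entry]
  have : ∀ j : Fin n, (if i = j then (1:ℝ) else r) * u j
      = (if i = j then (1 - r) * u j else 0) + r * u j := by
    intro j; split <;> ring
  rw [Finset.sum_congr rfl (fun j _ => this j), Finset.sum_add_distrib,
    Finset.sum_ite_eq, Finset.mul_sum]
  simp

lemma quad_form (b₁ b₂ : ℕ) (r : ℝ) (x : Fin b₁ ⊕ Fin b₂ → ℝ) :
    x ⬝ᵥ (blockM2 b₁ b₂ r r (-r) *ᵥ x) =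
      (1 - r) * ((∑ i, x (Sum.inl i) ^ 2) + ∑ j, x (Sum.inr j) ^ 2)
      + r * ((∑ i, x (Sum.inl i)) - ∑ j, x (Sum.inr j)) ^ 2 := by
  classical
  set S₁ := ∑ i, x (Sum.inl i) with hS₁
  set S₂ := ∑ j, x (Sum.inr j) with hS₂
  have hmv : ∀ k, (blockM2 b₁ b₂ r r (-r) *ᵥ x) k =
      match k with
      | Sum.inl i => (1 - r) * x (Sum.inl i) + r * S₁ + (-r) * S₂
      | Sum.inr j => (1 - r) * x (Sum.inr j) + r * S₂ + (-r) * S₁ := by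
    intro k
    cases k with
    | inl i =>
        simp only [Matrix.mulVec, dotProduct, Fintype.sum_sum_type,
          blockM2, Matrix.fromBlocks_apply₁₁, Matrix.fromBlocks_apply₁₂, Matrix.of_apply]
        rw [row_sum]
        simp only [← Finset.mul_sum, ← hS₁, ← hS₂]
        try ring
    | inr j =>
        simp only [Matrix.mulVec, dotProduct, Fintype.sum_sum_type,
          blockM2, Matrix.fromBlocks_apply₂₁, Matrix.fromBlocks_apply₂₂, Matrix.of_apply]
        rw [row_sum]
        simp only [← Finset.mul_sum, ← hS₁, ← hS₂]
        try ring
  simp only [dotProduct, Fintype.sum_sum_type, hmv]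
  have e1 : ∑ i, x (Sum.inl i) * ((1 - r) * x (Sum.inl i) + r * S₁ + (-r) * S₂)
      = (1 - r) * (∑ i, x (Sum.inl i) ^ 2) + S₁ * (r * S₁ + (-r) * S₂) := by
    rw [Finset.sum_congr rfl (fun i _ => by ring :
      ∀ i ∈ Finset.univ, x (Sum.inl i) * ((1 - r) * x (Sum.inl i) + r * S₁ + (-r) * S₂)
        = (1 - r) * x (Sum.inl i) ^ 2 + x (Sum.inl i) * (r * S₁ + (-r) * S₂)),
      Finset.sum_add_distrib, ← Finset.mul_sum, ← Finset.sum_mul, ← hS₁]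
  have e2 : ∑ j, x (Sum.inr j) * ((1 - r) * x (Sum.inr j) + r * S₂ + (-r) * S₁)
      = (1 - r) * (∑ j, x (Sum.inr j) ^ 2) + S₂ * (r * S₂ + (-r) * S₁) := by
    rw [Finset.sum_congr rfl (fun j _ => by ring :
      ∀ j ∈ Finset.univ, x (Sum.inr j) * ((1 - r) * x (Sum.inr j) + r * S₂ + (-r) * S₁)
        = (1 - r) * x (Sum.inr j) ^ 2 + x (Sum.inr j) * (r * S₂ + (-r) * S₁)),
      Finset.sum_add_distrib, ← Finset.mul_sum, ← Finset.sum_mul, ← hS₂]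
  rw [e1, e2]; ring

lemma main_posdef (b₁ b₂ : ℕ) (r : ℝ) (hr0 : 0 ≤ r) (hr1 : r < 1) :
    (blockM2 b₁ b₂ r r (-r)).PosDef := by
  classical
  rw [Matrix.posDef_iff_dotProduct_mulVec]
  constructor
  · rw [Matrix.IsHermitian]
    ext k l
    cases k <;> cases l <;>
      simp [blockM2, Matrix.conjTranspose_apply, Matrix.one_apply, Jmat, eq_comm]
  · intro x hx
    have hq := quad_form b₁ b₂ r x
    have hpos : 0 < (∑ i, x (Sum.inl i) ^ 2) + ∑ j, x (Sum.inr j) ^ 2 := by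
      have hnn1 : 0 ≤ ∑ i, x (Sum.inl i) ^ 2 := Finset.sum_nonneg fun i _ => sq_nonneg _
      have hnn2 : 0 ≤ ∑ j, x (Sum.inr j) ^ 2 := Finset.sum_nonneg fun j _ => sq_nonneg _
      rcases (em (∀ k, x k = 0)) with h | h
      · exact absurd (funext h) hx
      · push_neg at h
        obtain ⟨k, hk⟩ := h
        have : 0 < x k ^ 2 := by positivity
        cases k with
        | inl i =>
            have : 0 < ∑ i', x (Sum.inl i') ^ 2 :=
              Finset.sum_pos' (fun _ _ => sq_nonneg _) ⟨i, Finset.mem_univ _, this⟩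
            linarith
        | inr j =>
            have : 0 < ∑ j', x (Sum.inr j') ^ 2 :=
              Finset.sum_pos' (fun _ _ => sq_nonneg _) ⟨j, Finset.mem_univ _, this⟩
            linarith
    simp only [RCLike.re_to_real, star_trivial]
    rw [hq]
    nlinarith [sq_nonneg ((∑ i, x (Sum.inl i)) - ∑ j, x (Sum.inr j))]

theorem stmt_19 (b₁ b₂ : ℕ) (hb₁ : 2 ≤ b₁) (hb₂ : 2 ≤ b₂) (ρ : ℝ)
    (hρ : ρ ∈ Set.Ioo (-1 : ℝ) 1) (hρneg : ρ < 0) :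
    (∃ ρ₁ ρ₂ : ℝ, ρ₁ ∈ Set.Ioo (-1 : ℝ) 1 ∧ ρ₂ ∈ Set.Ioo (-1 : ℝ) 1 ∧
      (blockM2 b₁ b₂ ρ₁ ρ₂ ρ).PosDef) ∧
    (blockM2 b₁ b₂ |ρ| |ρ| ρ).PosDef := by
  obtain ⟨h1, h2⟩ := hρ
  have habs : |ρ| = -ρ := abs_of_neg hρneg
  have h0 : (0:ℝ) ≤ |ρ| := abs_nonneg _
  have hlt : |ρ| < 1 := by rw [habs]; linarith
  have key : (blockM2 b₁ b₂ |ρ| |ρ| ρ).PosDef := by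
    have := main_posdef b₁ b₂ |ρ| h0 hlt
    have hρeq : ρ = -|ρ| := by rw [habs]; ring
    rwa [← hρeq] at this
  exact ⟨⟨|ρ|, |ρ|, ⟨by linarith, hlt⟩, ⟨by linarith, hlt⟩, key⟩, key⟩
end
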